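/- (Tail estimate for cubes strictly containing Q₀) Let μ be a nonnegative Radon measure on ℝⁿ with ‖μ‖_{n−αp} < ∞, and let 0 < p ≤ p₀ < n/α, p_j ∈ (1,∞), 1/p = ∑ 1/p_j. Let S ⊆ D be a sparse family and Q₀ ∈ D. Then |Q₀|^{1/p₀−1/p} ( ∫_{Q₀} ( ∑_{S ∈ S, S ⊋ Q₀} |S|^{α/n} ∏_j (|S|^{-1}∫_S |f_j|) 1_{E_S(S)} )^p dμ )^{1/p} ≲ ‖μ‖_{n−αp}^{1/p} ‖f⃗‖_{M^{P⃗,p₀}}. -/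

import Mathlib

open MeasureTheory ENNReal

noncomputable section

variable {n : ℕ}

/-- Axis-parallel cube with lower corner `a` and side length `r` (half-open). -/
def cube (a : Fin n → ℝ) (r : ℝ) : Set (Fin n → ℝ) :=
  {y | ∀ i, a i ≤ y i ∧ y i < a i + r}

/-- The dyadic cube `2^{-k}(m + [0,1)^n)`. -/
def dyadicCube (k : ℤ) (mv : Fin n → ℤ) : Set (Fin n → ℝ) :=
  cube (fun i => (mv i : ℝ) * (2 : ℝ) ^ (-k)) ((2 : ℝ) ^ (-k))

/-- The concentric triple `3Q` of the cube with corner `a` and side `r`. -/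
def tripleCube (a : Fin n → ℝ) (r : ℝ) : Set (Fin n → ℝ) :=
  cube (fun i => a i - r) (3 * r)

/-- The Morrey norm `‖f‖_{M^{p,p₀}}`. -/
def morreyNorm (p p0 : ℝ) (f : (Fin n → ℝ) → ℝ) : ℝ≥0∞ :=
  ⨆ (a : Fin n → ℝ) (r : ℝ) (_ : 0 < r),
    volume (cube a r) ^ (1 / p0 - 1 / p) *
      (∫⁻ x in cube a r, ENNReal.ofReal |f x| ^ p) ^ (1 / p)

/-- The product Morrey norm `‖f⃗‖_{M^{P⃗,p₀}}`. -/
def prodMorreyNorm {m : ℕ} (P : Fin m → ℝ) (p p0 : ℝ)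
    (f : Fin m → (Fin n → ℝ) → ℝ) : ℝ≥0∞ :=
  ⨆ (a : Fin n → ℝ) (r : ℝ) (_ : 0 < r),
    volume (cube a r) ^ (1 / p0 - 1 / p) *
      ∏ j, (∫⁻ x in cube a r, ENNReal.ofReal |f j x| ^ P j) ^ (1 / P j)

/-- The Radon–Morrey norm `‖g‖_{M_μ^{q,q₀}}`. -/
def radonMorreyNorm (μ : Measure (Fin n → ℝ)) (q q0 : ℝ)
    (g : (Fin n → ℝ) → ℝ≥0∞) : ℝ≥0∞ :=
  ⨆ (a : Fin n → ℝ) (r : ℝ) (_ : 0 < r),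
    volume (cube a r) ^ (1 / q0 - 1 / q) * (∫⁻ x in cube a r, g x ^ q ∂μ) ^ (1 / q)

/-- The growth norm `‖μ‖_β := sup_Q μ(Q)/ℓ_Q^β`. -/
def measureGrowthNorm (μ : Measure (Fin n → ℝ)) (β : ℝ) : ℝ≥0∞ :=
  ⨆ (a : Fin n → ℝ) (r : ℝ) (_ : 0 < r), μ (cube a r) / ENNReal.ofReal r ^ β

/-- The `m`-sublinear fractional maximal operator `𝔐_α`. -/
def fracMaximal {m : ℕ} (α : ℝ) (f : Fin m → (Fin n → ℝ) → ℝ)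
    (x : Fin n → ℝ) : ℝ≥0∞ :=
  ⨆ (a : Fin n → ℝ) (r : ℝ) (_ : 0 < r) (_ : x ∈ cube a r),
    ENNReal.ofReal r ^ (α - (m : ℝ) * n) *
      ∏ j, ∫⁻ y in cube a r, ENNReal.ofReal |f j y|

/-- The dyadic `m`-sublinear fractional maximal operator `𝔐_α^𝒟`. -/
def dyadicFracMaximal {m : ℕ} (α : ℝ) (f : Fin m → (Fin n → ℝ) → ℝ)
    (x : Fin n → ℝ) : ℝ≥0∞ :=
  ⨆ (k : ℤ) (mv : Fin n → ℤ) (_ : x ∈ dyadicCube k mv),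
    ENNReal.ofReal ((2 : ℝ) ^ (-k)) ^ (α - (m : ℝ) * n) *
      ∏ j, ∫⁻ y in dyadicCube k mv, ENNReal.ofReal |f j y|

/-- The dyadic `m`-linear fractional integral operator `ℑ_α^𝒟`. -/
def dyadicFracIntegral {m : ℕ} (α : ℝ) (f : Fin m → (Fin n → ℝ) → ℝ)
    (x : Fin n → ℝ) : ℝ≥0∞ :=
  ∑' qk : ℤ × (Fin n → ℤ),
    (dyadicCube qk.1 qk.2).indicator
      (fun _ => ENNReal.ofReal ((2 : ℝ) ^ (-qk.1)) ^ (α - (m : ℝ) * n) *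
        ∏ j, ∫⁻ y in dyadicCube qk.1 qk.2, ENNReal.ofReal |f j y|) x

/-- The `m`-linear fractional integral operator `ℑ_α` (with Euclidean distances). -/
def fracIntegral {m : ℕ} (α : ℝ) (f : Fin m → (Fin n → ℝ) → ℝ)
    (x : Fin n → ℝ) : ℝ≥0∞ :=
  ∫⁻ y : Fin m → Fin n → ℝ,
    (∏ j, ENNReal.ofReal |f j (y j)|) /
      ENNReal.ofReal ((∑ j, Real.sqrt (∑ i, (x i - y j i) ^ 2)) ^ ((m : ℝ) * n - α))

/-! The sets `E S` are pairwise disjoint, so at each point at most one cube `S ⊋ Q₀` contributes to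
the sum. By multilinear Hölder each contribution is at most `|S|^{α/n - 1/p₀} ‖f⃗‖_{M^{P⃗,p₀}}`, and
since `α/n < 1/p₀` this is at most `|Q₀|^{α/n - 1/p₀} ‖f⃗‖_{M^{P⃗,p₀}}`. Integrating this constant
bound over `Q₀` and using `μ(Q₀) ≤ ‖μ‖_{n-αp} ℓ(Q₀)^{n-αp}`, all powers of `ℓ(Q₀)` cancel. -/

section Lintegral

variable {X : Type*} [MeasurableSpace X] (μ : Measure X)

/-- No measurability of `f` is needed: the lower Lebesgue integral is a supremum over simple
functions below `f`. -/
lemma lintegral_le_lintegral_rpow_mul_measure_univ (f : X → ℝ≥0∞) {q : ℝ} (hq : 1 < q) :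
    ∫⁻ x, f x ∂μ ≤ (∫⁻ x, f x ^ q ∂μ) ^ (1 / q) * μ Set.univ ^ (1 - 1 / q) := by
  have hpq : q.HolderConjugate q.conjExponent := .conjExponent hq
  have hexp : 1 / q.conjExponent = 1 - 1 / q := by
    rw [one_div, one_div, ← hpq.one_sub_inv]
  rw [lintegral_def]
  refine iSup₂_le fun g hg => ?_
  rw [← SimpleFunc.lintegral_eq_lintegral]
  calc ∫⁻ x, g x ∂μ ≤ (∫⁻ x, g x ^ q ∂μ) ^ (1 / q) * μ Set.univ ^ (1 - 1 / q) := by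
        simpa only [Pi.mul_apply, mul_one, ENNReal.one_rpow, lintegral_one, hexp] using
          ENNReal.lintegral_mul_le_Lp_mul_Lq μ hpq g.measurable.aemeasurable
            (aemeasurable_const (b := (1 : ℝ≥0∞)))
    _ ≤ (∫⁻ x, f x ^ q ∂μ) ^ (1 / q) * μ Set.univ ^ (1 - 1 / q) := by
        gcongr with x
        exact hg x

lemma inv_measure_mul_setLIntegral_le {s : Set X} (hs0 : μ s ≠ 0) (hs : μ s ≠ ∞)
    (f : X → ℝ≥0∞) {q : ℝ} (hq : 1 < q) :
    (μ s)⁻¹ * ∫⁻ x in s, f x ∂μ ≤ μ s ^ (-(1 / q)) * (∫⁻ x in s, f x ^ q ∂μ) ^ (1 / q) := by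
  have hHolder := lintegral_le_lintegral_rpow_mul_measure_univ (μ.restrict s) f hq
  rw [Measure.restrict_apply_univ] at hHolder
  calc (μ s)⁻¹ * ∫⁻ x in s, f x ∂μ
      ≤ μ s ^ (-1 : ℝ) * ((∫⁻ x in s, f x ^ q ∂μ) ^ (1 / q) * μ s ^ (1 - 1 / q)) := by
        rw [ENNReal.rpow_neg_one]
        gcongr
    _ = μ s ^ (-(1 / q)) * (∫⁻ x in s, f x ^ q ∂μ) ^ (1 / q) := by
        rw [mul_left_comm, ← ENNReal.rpow_add _ _ hs0 hs]
        ring_nf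

lemma setLIntegral_rpow_rpow_le {s : Set X}
    {F : X → ℝ≥0∞} {B : ℝ≥0∞} (hF : ∀ x, F x ≤ B) {p : ℝ} (hp : 0 < p) :
    (∫⁻ x in s, F x ^ p ∂μ) ^ (1 / p) ≤ B * μ s ^ (1 / p) := by
  calc (∫⁻ x in s, F x ^ p ∂μ) ^ (1 / p) ≤ (∫⁻ _ in s, B ^ p ∂μ) ^ (1 / p) := by
        gcongr with x
        exact hF x
    _ = B * μ s ^ (1 / p) := by
        rw [setLIntegral_const, ENNReal.mul_rpow_of_nonneg _ _ (by positivity),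
          ← ENNReal.rpow_mul, mul_one_div_cancel hp.ne', ENNReal.rpow_one]

end Lintegral

lemma ENNReal.rpow_finsetSum {ι : Type*} (s : Finset ι) {x : ℝ≥0∞} (hx0 : x ≠ 0) (hx : x ≠ ∞)
    (c : ι → ℝ) : x ^ (∑ j ∈ s, c j) = ∏ j ∈ s, x ^ c j := by
  induction s using Finset.cons_induction with
  | empty => simp
  | cons a s ha ih => rw [Finset.sum_cons, Finset.prod_cons, ENNReal.rpow_add _ _ hx0 hx, ih]

open Function in
lemma tsum_indicator_le_of_pairwise_disjoint {ι X : Type*} {E : ι → Set X}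
    (hE : Pairwise (Disjoint on E)) {g : ι → ℝ≥0∞} {B : ℝ≥0∞} (hg : ∀ i, g i ≤ B) (x : X) :
    ∑' i, (E i).indicator (fun _ => g i) x ≤ B := by
  by_cases hx : ∃ i, x ∈ E i
  · obtain ⟨i, hxi⟩ := hx
    have hothers : ∀ j ≠ i, (E j).indicator (fun _ => g j) x = 0 := fun j hji =>
      Set.indicator_of_notMem (fun hxj => Set.disjoint_left.mp (hE hji) hxj hxi) _
    rw [tsum_eq_single i hothers, Set.indicator_of_mem hxi]
    exact hg i
  · push Not at hx
    simp [Set.indicator_of_notMem (hx _)]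

section Cubes

variable {n : ℕ}

lemma volume_cube (a : Fin n → ℝ) (r : ℝ) :
    volume (cube a r) = ENNReal.ofReal r ^ (n : ℝ) := by
  have h : cube a r = Set.univ.pi fun i => Set.Ico (a i) (a i + r) := by
    ext y
    simp [cube, Set.mem_pi]
  rw [h, volume_pi_pi]
  simp only [Real.volume_Ico, add_sub_cancel_left]
  rw [Finset.prod_const, Finset.card_univ, Fintype.card_fin, ← ENNReal.rpow_natCast]

lemma volume_cube_ne_zero (a : Fin n → ℝ) {r : ℝ} (hr : 0 < r) : volume (cube a r) ≠ 0 := by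
  rw [volume_cube a r]
  exact (ENNReal.rpow_pos (ENNReal.ofReal_pos.mpr hr) ENNReal.ofReal_ne_top).ne'

lemma volume_cube_ne_top (a : Fin n → ℝ) (r : ℝ) : volume (cube a r) ≠ ∞ := by
  rw [volume_cube a r]
  exact ENNReal.rpow_ne_top_of_nonneg (Nat.cast_nonneg n) ENNReal.ofReal_ne_top

lemma measure_cube_le_measureGrowthNorm_mul (μ : Measure (Fin n → ℝ)) (β : ℝ)
    (a : Fin n → ℝ) {r : ℝ} (hr : 0 < r) :
    μ (cube a r) ≤ measureGrowthNorm μ β * ENNReal.ofReal r ^ β := by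
  have hr' : ENNReal.ofReal r ≠ 0 := (ENNReal.ofReal_pos.mpr hr).ne'
  rw [← ENNReal.div_le_iff (ENNReal.rpow_pos (pos_iff_ne_zero.mpr hr') ENNReal.ofReal_ne_top).ne'
    (ENNReal.rpow_ne_top_of_ne_zero hr' ENNReal.ofReal_ne_top)]
  exact le_iSup_of_le a (le_iSup_of_le r (le_iSup_of_le hr le_rfl))

lemma volume_cube_rpow_mul_measure_rpow_le (hn : 0 < n) (μ : Measure (Fin n → ℝ))
    {α p : ℝ} (hp : 0 < p) (a : Fin n → ℝ) {r : ℝ} (hr : 0 < r) :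
    volume (cube a r) ^ (α / n - 1 / p) * μ (cube a r) ^ (1 / p) ≤
      measureGrowthNorm μ (n - α * p) ^ (1 / p) := by
  set t := ENNReal.ofReal r
  have ht0 : t ≠ 0 := (ENNReal.ofReal_pos.mpr hr).ne'
  have hnR : (n : ℝ) ≠ 0 := Nat.cast_ne_zero.mpr hn.ne'
  calc volume (cube a r) ^ (α / n - 1 / p) * μ (cube a r) ^ (1 / p)
      ≤ t ^ (n * (α / n - 1 / p)) *
          (measureGrowthNorm μ (n - α * p) * t ^ (n - α * p)) ^ (1 / p) := by
        rw [volume_cube a r, ← ENNReal.rpow_mul]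
        gcongr
        exact measure_cube_le_measureGrowthNorm_mul μ _ a hr
    _ = measureGrowthNorm μ (n - α * p) ^ (1 / p) * t ^ (0 : ℝ) := by
        rw [ENNReal.mul_rpow_of_nonneg _ _ (by positivity), ← ENNReal.rpow_mul, mul_left_comm,
          ← ENNReal.rpow_add _ _ ht0 ENNReal.ofReal_ne_top]
        congr 2
        field_simp
        ring
    _ = measureGrowthNorm μ (n - α * p) ^ (1 / p) := by
        rw [ENNReal.rpow_zero, mul_one]

variable {m : ℕ} {P : Fin m → ℝ} {p p0 : ℝ}

lemma prod_average_le_prodMorreyNorm (hP : ∀ j, 1 < P j) (hp : 1 / p = ∑ j, 1 / P j)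
    (f : Fin m → (Fin n → ℝ) → ℝ) (a : Fin n → ℝ) {r : ℝ} (hr : 0 < r) :
    ∏ j, (volume (cube a r))⁻¹ * ∫⁻ y in cube a r, ENNReal.ofReal |f j y| ≤
      volume (cube a r) ^ (-(1 / p0)) * prodMorreyNorm P p p0 f := by
  set V := volume (cube a r)
  have hV0 : V ≠ 0 := volume_cube_ne_zero a hr
  have hV : V ≠ ∞ := volume_cube_ne_top a r
  set L := ∏ j, (∫⁻ y in cube a r, ENNReal.ofReal |f j y| ^ P j) ^ (1 / P j)
  have hMorrey : V ^ (1 / p0 - 1 / p) * L ≤ prodMorreyNorm P p p0 f :=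
    le_iSup_of_le a (le_iSup_of_le r (le_iSup_of_le hr le_rfl))
  calc ∏ j, V⁻¹ * ∫⁻ y in cube a r, ENNReal.ofReal |f j y|
      ≤ ∏ j, V ^ (-(1 / P j)) * (∫⁻ y in cube a r, ENNReal.ofReal |f j y| ^ P j) ^ (1 / P j) :=
        Finset.prod_le_prod' fun j _ => inv_measure_mul_setLIntegral_le _ hV0 hV _ (hP j)
    _ = V ^ (-(1 / p)) * L := by
        rw [Finset.prod_mul_distrib, ← ENNReal.rpow_finsetSum _ hV0 hV, Finset.sum_neg_distrib,
          ← hp]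
    _ = V ^ (-(1 / p0)) * (V ^ (1 / p0 - 1 / p) * L) := by
        rw [← mul_assoc, ← ENNReal.rpow_add _ _ hV0 hV]
        ring_nf
    _ ≤ V ^ (-(1 / p0)) * prodMorreyNorm P p p0 f := by gcongr

lemma volume_rpow_mul_prod_average_le (hP : ∀ j, 1 < P j) (hp : 1 / p = ∑ j, 1 / P j)
    {γ : ℝ} (hγ : γ ≤ 1 / p0) (f : Fin m → (Fin n → ℝ) → ℝ) {a b : Fin n → ℝ} {r s : ℝ}
    (hs : 0 < s) (hsub : cube a r ⊆ cube b s) :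
    volume (cube b s) ^ γ * ∏ j, (volume (cube b s))⁻¹ * ∫⁻ y in cube b s, ENNReal.ofReal |f j y| ≤
      volume (cube a r) ^ (γ - 1 / p0) * prodMorreyNorm P p p0 f := by
  calc volume (cube b s) ^ γ * ∏ j, (volume (cube b s))⁻¹ *
          ∫⁻ y in cube b s, ENNReal.ofReal |f j y|
      ≤ volume (cube b s) ^ γ * (volume (cube b s) ^ (-(1 / p0)) * prodMorreyNorm P p p0 f) := by
        gcongr
        exact prod_average_le_prodMorreyNorm hP hp f b hs
    _ = (volume (cube b s) ^ (1 / p0 - γ))⁻¹ * prodMorreyNorm P p p0 f := by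
        rw [← mul_assoc, ← ENNReal.rpow_add _ _ (volume_cube_ne_zero b hs)
          (volume_cube_ne_top b s), ← ENNReal.rpow_neg]
        ring_nf
    _ ≤ (volume (cube a r) ^ (1 / p0 - γ))⁻¹ * prodMorreyNorm P p p0 f := by
        gcongr
    _ = volume (cube a r) ^ (γ - 1 / p0) * prodMorreyNorm P p p0 f := by
        rw [← ENNReal.rpow_neg, neg_sub]

end Cubes

theorem statement13_general (hn : 0 < n) (m : ℕ)
    (P : Fin m → ℝ) (hP : ∀ j, 1 < P j) (p p0 α : ℝ)
    (hp : 1 / p = ∑ j, 1 / P j) (hppos : 0 < p) (hpp0 : p ≤ p0)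
    (hp0n : p0 < n / α) :
    ∃ C : ℝ≥0∞, 0 < C ∧ C < ∞ ∧
      ∀ μ : Measure (Fin n → ℝ), IsLocallyFiniteMeasure μ →
        measureGrowthNorm μ (n - α * p) < ∞ →
        ∀ η : ℝ, 0 < η → η < 1 →
        ∀ (𝒮 : Set (ℤ × (Fin n → ℤ))) (E : ℤ × (Fin n → ℤ) → Set (Fin n → ℝ)),
          (∀ S ∈ 𝒮, MeasurableSet (E S) ∧ E S ⊆ dyadicCube S.1 S.2 ∧
            ENNReal.ofReal η * volume (dyadicCube S.1 S.2) ≤ volume (E S)) →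
          𝒮.PairwiseDisjoint E →
          ∀ (k0 : ℤ) (m0 : Fin n → ℤ) (f : Fin m → (Fin n → ℝ) → ℝ),
            volume (dyadicCube k0 m0) ^ (1 / p0 - 1 / p) *
              (∫⁻ x in dyadicCube k0 m0,
                (∑' S : {S : ℤ × (Fin n → ℤ) //
                    S ∈ 𝒮 ∧ dyadicCube k0 m0 ⊂ dyadicCube S.1 S.2},
                  (E S.1).indicator
                    (fun _ => volume (dyadicCube S.1.1 S.1.2) ^ (α / (n : ℝ)) *
                      ∏ j, (volume (dyadicCube S.1.1 S.1.2))⁻¹ *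
                        ∫⁻ y in dyadicCube S.1.1 S.1.2, ENNReal.ofReal |f j y|) x) ^ p
                ∂μ) ^ (1 / p) ≤
            C * measureGrowthNorm μ (n - α * p) ^ (1 / p) *
              prodMorreyNorm P p p0 f := by
  refine ⟨1, one_pos, ENNReal.one_lt_top, ?_⟩
  intro μ _ _ η _ _ 𝒮 E _ hdisj k0 m0 f
  set Q0 := dyadicCube k0 m0
  set N := prodMorreyNorm P p p0 f
  have hαn : α / n ≤ 1 / p0 := by
    rw [← one_div_div]
    exact (one_div_lt_one_div_of_lt (hppos.trans_le hpp0) hp0n).le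
  have hQ0 : volume Q0 ≠ 0 := volume_cube_ne_zero _ (by positivity)
  have hQ0' : volume Q0 ≠ ∞ := volume_cube_ne_top _ _
  have hdisj' : Pairwise fun S T : {S // S ∈ 𝒮 ∧ Q0 ⊂ dyadicCube S.1 S.2} =>
      Disjoint (E S) (E T) := fun S T hST => hdisj S.2.1 T.2.1 (Subtype.coe_injective.ne hST)
  calc _ ≤ volume Q0 ^ (1 / p0 - 1 / p) *
          (volume Q0 ^ (α / n - 1 / p0) * N * μ Q0 ^ (1 / p)) := by
        gcongr
        refine setLIntegral_rpow_rpow_le μ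
          (tsum_indicator_le_of_pairwise_disjoint hdisj' fun S => ?_) hppos
        exact volume_rpow_mul_prod_average_le hP hp hαn f (by positivity) S.2.2.subset
    _ = volume Q0 ^ (α / n - 1 / p) * μ Q0 ^ (1 / p) * N := by
        rw [← mul_assoc, ← mul_assoc, ← ENNReal.rpow_add _ _ hQ0 hQ0']
        ring_nf
    _ ≤ 1 * measureGrowthNorm μ (n - α * p) ^ (1 / p) * N := by
        rw [one_mul]
        gcongr
        exact volume_cube_rpow_mul_measure_rpow_le hn μ hppos _ (by positivity)

theorem statement13 (hn : 0 < n) (m : ℕ) (hm : 0 < m)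
    (P : Fin m → ℝ) (hP : ∀ j, 1 < P j) (p p0 α : ℝ)
    (hp : 1 / p = ∑ j, 1 / P j) (hppos : 0 < p) (hpp0 : p ≤ p0)
    (hα : 0 < α) (hp0n : p0 < n / α) (hαmn : α < (m : ℝ) * n) :
    ∃ C : ℝ≥0∞, 0 < C ∧ C < ∞ ∧
      ∀ μ : Measure (Fin n → ℝ), IsLocallyFiniteMeasure μ →
        measureGrowthNorm μ (n - α * p) < ∞ →
        ∀ η : ℝ, 0 < η → η < 1 →
        ∀ (𝒮 : Set (ℤ × (Fin n → ℤ))) (E : ℤ × (Fin n → ℤ) → Set (Fin n → ℝ)),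
          (∀ S ∈ 𝒮, MeasurableSet (E S) ∧ E S ⊆ dyadicCube S.1 S.2 ∧
            ENNReal.ofReal η * volume (dyadicCube S.1 S.2) ≤ volume (E S)) →
          𝒮.PairwiseDisjoint E →
          ∀ (k0 : ℤ) (m0 : Fin n → ℤ) (f : Fin m → (Fin n → ℝ) → ℝ),
            volume (dyadicCube k0 m0) ^ (1 / p0 - 1 / p) *
              (∫⁻ x in dyadicCube k0 m0,
                (∑' S : {S : ℤ × (Fin n → ℤ) //
                    S ∈ 𝒮 ∧ dyadicCube k0 m0 ⊂ dyadicCube S.1 S.2},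
                  (E S.1).indicator
                    (fun _ => volume (dyadicCube S.1.1 S.1.2) ^ (α / (n : ℝ)) *
                      ∏ j, (volume (dyadicCube S.1.1 S.1.2))⁻¹ *
                        ∫⁻ y in dyadicCube S.1.1 S.1.2, ENNReal.ofReal |f j y|) x) ^ p
                ∂μ) ^ (1 / p) ≤
            C * measureGrowthNorm μ (n - α * p) ^ (1 / p) *
              prodMorreyNorm P p p0 f :=
  statement13_general hn m P hP p p0 α hp hppos hpp0 hp0n
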